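/- arXiv:1405.2953 — 6 statements merged into one kernel-verified Lean document; each statement's English description precedes it below -/
import Mathlib

section
/- Every Markov triple can be obtained from the basic triple (1,1,1) by a finite sequence of elementary transforms (a,b,c) ↦ (a,b,3ab−c) together with permutations of the entries. -/
/-!
Vieta jumping. For a Markov triple `(a, b, c)` the entries `c` and `c' = 3ab − c` are the two
roots of `x² − 3abx + a² + b²`, so `c * c' = a² + b² > 0` and `(a, b, c')` is again a Markov
triple. When `c` is the largest entry, the quadratic is non-positive at `max a b ≤ c`, so unless
the triple is `(1, 1, 1)` the other root satisfies `c' < c`. Since elementary transforms are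
involutions, strong induction on `a + b + c` (after moving the largest entry to the last place)
connects every Markov triple to `(1, 1, 1)`.
-/

/-- A Markov triple: positive integers with `a² + b² + c² = 3abc`. -/
def IsMarkovTriple (a b c : ℤ) : Prop :=
  0 < a ∧ 0 < b ∧ 0 < c ∧ a ^ 2 + b ^ 2 + c ^ 2 = 3 * a * b * c

/-- One step on triples: an elementary transform `(a,b,c) ↦ (a,b,3ab−c)` or a
permutation of the entries. -/
inductive MarkovStep : ℤ × ℤ × ℤ → ℤ × ℤ × ℤ → Prop
  | elementary (a b c : ℤ) : MarkovStep (a, b, c) (a, b, 3 * a * b - c)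
  | swap₁₂ (a b c : ℤ) : MarkovStep (a, b, c) (b, a, c)
  | swap₂₃ (a b c : ℤ) : MarkovStep (a, b, c) (a, c, b)

open Relation

theorem MarkovStep.elementary_inv (a b c : ℤ) :
    MarkovStep (a, b, 3 * a * b - c) (a, b, c) := by
  simpa using MarkovStep.elementary a b (3 * a * b - c)

namespace IsMarkovTriple

variable {a b c : ℤ}

theorem swap₁₂ (h : IsMarkovTriple a b c) : IsMarkovTriple b a c := by
  obtain ⟨ha, hb, hc, h⟩ := h
  exact ⟨hb, ha, hc, by linear_combination h⟩

theorem swap₂₃ (h : IsMarkovTriple a b c) : IsMarkovTriple a c b := by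
  obtain ⟨ha, hb, hc, h⟩ := h
  exact ⟨ha, hc, hb, by linear_combination h⟩

theorem mul_elementary (h : IsMarkovTriple a b c) :
    c * (3 * a * b - c) = a ^ 2 + b ^ 2 := by
  linear_combination -h.2.2.2

theorem elementary (h : IsMarkovTriple a b c) : IsMarkovTriple a b (3 * a * b - c) := by
  have hpos : 0 < c * (3 * a * b - c) :=
    h.mul_elementary ▸ add_pos (pow_pos h.1 2) (pow_pos h.2.1 2)
  obtain ⟨ha, hb, hc, heq⟩ := h
  exact ⟨ha, hb, pos_of_mul_pos_right hpos hc.le, by linear_combination heq⟩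

theorem elementary_lt (h : IsMarkovTriple a b c) (hac : a ≤ c) (hbc : b ≤ c) (hc : 1 < c) :
    3 * a * b - c < c := by
  obtain ⟨ha, hb, -, heq⟩ := h
  nlinarith

end IsMarkovTriple

/-- every Markov triple is obtained from `(1,1,1)` by a finite sequence of
elementary transforms together with permutations of the entries. -/
theorem markov_tree (a b c : ℤ) (h : IsMarkovTriple a b c) :
    Relation.ReflTransGen MarkovStep (1, 1, 1) (a, b, c) := by
  induction hn : (a + b + c).toNat using Nat.strong_induction_on generalizing a b c with
  | _ n ih =>
  wlog hmax : a ≤ c ∧ b ≤ c generalizing a b c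
  · rcases le_total a b with hab | hba
    · refine (this a c b h.swap₂₃ ?_ (by omega)).tail (MarkovStep.swap₂₃ a c b)
      rw [← hn]; ring_nf
    · refine ((this b c a h.swap₁₂.swap₂₃ ?_ (by omega)).tail (MarkovStep.swap₂₃ b c a)).tail
        (MarkovStep.swap₁₂ b a c)
      rw [← hn]; ring_nf
  obtain ⟨hac, hbc⟩ := hmax
  have ⟨ha, hb, hc, _⟩ := h
  obtain rfl | hc : c = 1 ∨ 1 < c := by omega
  · obtain rfl : a = 1 := by omega
    obtain rfl : b = 1 := by omega
    exact ReflTransGen.refl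
  have hlt := h.elementary_lt hac hbc hc
  have hpos := h.elementary.2.2.1
  exact (ih _ (by omega) _ _ _ h.elementary rfl).tail (MarkovStep.elementary_inv a b c)
end

section
/- The triple (1,1,1) satisfies the Markov equation, and if (a,b,c) is a Markov triple with a ≤ b ≤ c and c > 1, then 3ab − c < c, so the elementary transform strictly decreases the maximal entry unless (a,b,c) = (1,1,1) or (1,1,2). -/
theorem isMarkovTriple_one_one_one : IsMarkovTriple 1 1 1 :=
  ⟨one_pos, one_pos, one_pos, by norm_num⟩

theorem IsMarkovTriple.eq_one_or_eq_two {c : ℤ} (h : IsMarkovTriple 1 1 c) : c = 1 ∨ c = 2 := by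
  have hfac : (c - 1) * (c - 2) = 0 := by linear_combination h.2.2.2
  rcases mul_eq_zero.mp hfac with h1 | h2
  · exact .inl (by linarith)
  · exact .inr (by linarith)

theorem sq_add_two_mul_sq_lt {a b : ℤ} (ha : 0 < a) (hab : a ≤ b) (hne : ¬(a = 1 ∧ b = 1)) :
    a ^ 2 + 2 * b ^ 2 < 3 * a * b ^ 2 := by
  rcases (show a = 1 ∨ 2 ≤ a by omega) with rfl | ha2
  · have hb : 2 ≤ b := by omega
    nlinarith
  · nlinarith [mul_le_mul hab hab ha.le (ha.trans_le hab).le]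

theorem IsMarkovTriple.sub_mul_sub_transform {a b c : ℤ} (h : IsMarkovTriple a b c) :
    (b - c) * (b - (3 * a * b - c)) = a ^ 2 + 2 * b ^ 2 - 3 * a * b ^ 2 := by
  linear_combination -h.2.2.2

theorem IsMarkovTriple.transform_lt_middle {a b c : ℤ} (h : IsMarkovTriple a b c)
    (hab : a ≤ b) (hbc : b ≤ c) (hne : ¬(a = 1 ∧ b = 1)) : 3 * a * b - c < b := by
  have hneg : (b - c) * (b - (3 * a * b - c)) < 0 := by
    rw [h.sub_mul_sub_transform]
    linarith [sq_add_two_mul_sq_lt h.1 hab hne]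
  by_contra! hle
  nlinarith [mul_nonneg (sub_nonneg.mpr hbc) (sub_nonneg.mpr hle)]

/-- `(1,1,1)` satisfies the Markov equation, and for any Markov triple
`(a,b,c)` with `a ≤ b ≤ c`, `c > 1` which is not `(1,1,1)` or `(1,1,2)`, the elementary
transform strictly decreases the maximal entry: `3ab − c < c`. -/
theorem markov_descent :
    IsMarkovTriple 1 1 1 ∧
      ∀ a b c : ℤ, IsMarkovTriple a b c → a ≤ b → b ≤ c → 1 < c →
        (a, b, c) ≠ (1, 1, 1) → (a, b, c) ≠ (1, 1, 2) → 3 * a * b - c < c := by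
  refine ⟨isMarkovTriple_one_one_one, fun a b c h hab hbc _ h111 h112 => ?_⟩
  by_cases hab1 : a = 1 ∧ b = 1
  · obtain ⟨rfl, rfl⟩ := hab1
    rcases h.eq_one_or_eq_two with rfl | rfl <;> simp at h111 h112
  · exact (h.transform_lt_middle hab hbc hab1).trans_le hbc
end

section
/- A one-dimensional integral polytope (segment) of integral length n in ℤᵈ decomposes as a Minkowski sum of n integral segments of integral length 1, and this is its unique decomposition into irreducible integral summands up to translation. -/
open Pointwise

/-- The canonical map `ℤᵈ → ℝᵈ`. -/
def latticeToReal {d : ℕ} (v : Fin d → ℤ) : Fin d → ℝ := fun i => (v i : ℝ)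

/-- An integral polytope in `ℝᵈ`: the convex hull of finitely many lattice points. -/
def IsIntegralPolytope {d : ℕ} (P : Set (Fin d → ℝ)) : Prop :=
  ∃ S : Finset (Fin d → ℤ), P = convexHull ℝ (latticeToReal '' (S : Set (Fin d → ℤ)))

/-- An integral polytope is irreducible if it is not a single point and cannot be
written as the Minkowski sum of two integral polytopes neither of which is a single
point. -/
def IsIrreducibleIntegralPolytope {d : ℕ} (P : Set (Fin d → ℝ)) : Prop :=
  IsIntegralPolytope P ∧ (¬ ∃ p, P = {p}) ∧
    ¬ ∃ Q R : Set (Fin d → ℝ), IsIntegralPolytope Q ∧ IsIntegralPolytope R ∧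
      (¬ ∃ q, Q = {q}) ∧ (¬ ∃ r, R = {r}) ∧ P = Q + R

/-- A primitive lattice vector: its coordinates have no common non-unit divisor. -/
def IsPrimitiveVector {d : ℕ} (v : Fin d → ℤ) : Prop :=
  v ≠ 0 ∧ ∀ m : ℤ, (∀ i, m ∣ v i) → IsUnit m

/-!
A Minkowski summand `P` of the segment `[p, p + n v]` lies on a line parallel to `v`. Being the
convex hull of lattice points on such a line, and `v` being primitive, it is a lattice segment
`[a, a + k v]`; irreducibility forces `k = 1`, because `[a, a + k v] = [a, a + v] + [0, (k - 1) v]`.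
So the summands add up to a translate of `L.length • [0, v]`, and a linear functional taking the
value `1` at `v` reads off `L.length = n`.
-/

theorem exists_list_sum_eq_singleton_add_nsmul {E : Type*} [AddCommMonoid E] {s : Set E}
    {L : List (Set E)} (h : ∀ P ∈ L, ∃ a, P = {a} + s) : ∃ A, L.sum = {A} + L.length • s := by
  induction L with
  | nil => exact ⟨0, by simp [Set.singleton_zero]⟩
  | cons P L ih =>
    obtain ⟨a, rfl⟩ := h P List.mem_cons_self
    obtain ⟨A, hA⟩ := ih fun Q hQ ↦ h Q (List.mem_cons_of_mem _ hQ)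
    exact ⟨a + A, by rw [List.sum_cons, hA, List.length_cons, succ_nsmul', add_add_add_comm,
      Set.singleton_add_singleton]⟩

section Segment

variable {𝕜 E : Type*} [Field 𝕜] [LinearOrder 𝕜] [IsStrictOrderedRing 𝕜] [AddCommGroup E]
  [Module 𝕜 E]

theorem segment_add_smul (a w : E) (c : 𝕜) :
    segment 𝕜 a (a + c • w) = {a} + c • segment 𝕜 0 w := by
  have hscale : c • segment 𝕜 0 w = segment 𝕜 0 (c • w) := by
    calc c • segment 𝕜 0 w = (LinearMap.lsmul 𝕜 E c).toAffineMap '' segment 𝕜 0 w :=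
          Set.image_smul.symm
      _ = segment 𝕜 0 (c • w) := by rw [image_segment]; simp [LinearMap.lsmul_apply]
  rw [hscale, Set.singleton_add, segment_translate_image, add_zero]

theorem Convex.nsmul_eq_smul {s : Set E} (hs : Convex 𝕜 s) (hne : s.Nonempty) :
    ∀ n : ℕ, n • s = (n : 𝕜) • s
  | 0 => by simp [Set.zero_smul_set hne]
  | n + 1 => by
    rw [succ_nsmul, hs.nsmul_eq_smul hne n, Nat.cast_succ,
      hs.add_smul (Nat.cast_nonneg n) zero_le_one, one_smul]

theorem eq_of_segment_add_smul_eq {w : E} (hw : w ≠ 0) {a b : E} {c c' : 𝕜} (hc : 0 ≤ c)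
    (hc' : 0 ≤ c') (h : segment 𝕜 a (a + c • w) = segment 𝕜 b (b + c' • w)) : c = c' := by
  obtain ⟨φ, hφ⟩ := Module.exists_dual_forall_apply_eq_one
    (LinearIndepOn.singleton (R := 𝕜) (v := fun _ : Unit ↦ w) (i := ()) hw)
  have hφw : φ w = 1 := hφ () rfl
  have hφseg (x : E) (r : 𝕜) : φ '' segment 𝕜 x (x + r • w) = segment 𝕜 (φ x) (φ x + r) := by
    simpa [hφw] using image_segment 𝕜 φ.toAffineMap x (x + r • w)
  have himage := congrArg (φ '' ·) h
  simp only [hφseg] at himage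
  rw [segment_eq_Icc (le_add_of_nonneg_right hc), segment_eq_Icc (le_add_of_nonneg_right hc'),
    Set.Icc_eq_Icc_iff (le_add_of_nonneg_right hc)] at himage
  linarith [himage.1, himage.2]

theorem exists_subset_line_of_add_eq_segment {P C : Set E} (hC : C.Nonempty) {a w : E} {c : 𝕜}
    (h : P + C = segment 𝕜 a (a + c • w)) :
    ∃ x₀ : E, P ⊆ (AffineSubspace.mk' x₀ (𝕜 ∙ w) : Set E) := by
  obtain ⟨y, hy⟩ := hC
  refine ⟨a - y, fun x hx ↦ ?_⟩
  have hxy : x + y ∈ segment 𝕜 a (a + c • w) := h ▸ Set.add_mem_add hx hy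
  rw [segment_eq_image'] at hxy
  obtain ⟨t, -, hxy⟩ := hxy
  rw [SetLike.mem_coe, AffineSubspace.mem_mk', Submodule.mem_span_singleton]
  simp only [add_sub_cancel_left] at hxy
  refine ⟨t * c, ?_⟩
  calc (t * c) • w = (a + t • c • w) - a := by rw [mul_smul]; abel
    _ = x -ᵥ (a - y) := by rw [hxy, vsub_eq_sub]; abel

theorem not_exists_segment_eq_singleton {x y : E} (h : x ≠ y) : ¬ ∃ z, segment 𝕜 x y = {z} := by
  rintro ⟨z, hz⟩
  have hx : x ∈ ({z} : Set E) := hz ▸ left_mem_segment 𝕜 x y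
  have hy : y ∈ ({z} : Set E) := hz ▸ right_mem_segment 𝕜 x y
  exact h (hx.trans hy.symm)

theorem IsLeast.convexHull_eq_Icc {s : Set 𝕜} {a b : 𝕜} (ha : IsLeast s a)
    (hb : IsGreatest s b) : convexHull 𝕜 s = Set.Icc a b :=
  (convexHull_min (fun _ hx ↦ Set.mem_Icc.2 ⟨ha.2 hx, hb.2 hx⟩) (convex_Icc a b)).antisymm <| by
    rw [← segment_eq_Icc (ha.2 hb.1)]
    exact segment_subset_convexHull ha.1 hb.1

theorem convexHull_image_add_intCast_smul {s : Set ℤ} {m₁ m₂ : ℤ} (h₁ : IsLeast s m₁)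
    (h₂ : IsGreatest s m₂) (x w : E) :
    convexHull 𝕜 ((fun m : ℤ ↦ x + (m : 𝕜) • w) '' s) =
      segment 𝕜 (x + (m₁ : 𝕜) • w) (x + (m₂ : 𝕜) • w) := by
  let f : 𝕜 →ᵃ[𝕜] E := (LinearMap.toSpanSingleton 𝕜 E w).toAffineMap + AffineMap.const 𝕜 𝕜 x
  have hf (t : 𝕜) : f t = x + t • w := add_comm _ _
  have himage : (fun m : ℤ ↦ x + (m : 𝕜) • w) '' s = f '' ((Int.cast : ℤ → 𝕜) '' s) := by
    rw [Set.image_image]; simp only [hf]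
  rw [himage, ← f.image_convexHull, (Int.cast_mono.map_isLeast h₁).convexHull_eq_Icc
    (Int.cast_mono.map_isGreatest h₂), ← segment_eq_Icc (Int.cast_mono (h₁.2 h₂.1)),
    image_segment, hf, hf]

end Segment

section Lattice

variable {d : ℕ}

@[simp]
theorem latticeToReal_zero : latticeToReal (0 : Fin d → ℤ) = 0 := by
  funext i; simp [latticeToReal]

theorem latticeToReal_ne_zero {v : Fin d → ℤ} (hv : v ≠ 0) : latticeToReal v ≠ 0 :=
  fun h ↦ hv (funext fun i ↦ Int.cast_eq_zero.1 (congrFun h i : (v i : ℝ) = 0))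

@[simp]
theorem latticeToReal_add (u v : Fin d → ℤ) :
    latticeToReal (u + v) = latticeToReal u + latticeToReal v := by
  funext i; simp [latticeToReal]

@[simp]
theorem latticeToReal_sub (u v : Fin d → ℤ) :
    latticeToReal (u - v) = latticeToReal u - latticeToReal v := by
  funext i; simp [latticeToReal]

@[simp]
theorem latticeToReal_zsmul (m : ℤ) (v : Fin d → ℤ) :
    latticeToReal (m • v) = (m : ℝ) • latticeToReal v := by
  funext i; simp [latticeToReal]

theorem IsPrimitiveVector.exists_sum_mul_eq_one {v : Fin d → ℤ} (hv : IsPrimitiveVector v) :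
    ∃ c : Fin d → ℤ, ∑ i, c i * v i = 1 := by
  set I := Ideal.span (Set.range v)
  have hgen : ∀ i, Submodule.IsPrincipal.generator I ∣ v i := fun i ↦
    (Submodule.IsPrincipal.mem_iff_eq_smul_generator I).1 (Ideal.subset_span ⟨i, rfl⟩)
      |>.imp fun c hc ↦ by rw [hc, smul_eq_mul, mul_comm]
  have hI : I = ⊤ := by
    rw [← Submodule.IsPrincipal.span_singleton_generator I]
    exact Ideal.span_singleton_eq_top.2 (hv.2 _ hgen)
  have hone : (1 : ℤ) ∈ I := hI ▸ Submodule.mem_top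
  exact Ideal.mem_span_range_iff_exists_fun.1 hone

theorem IsPrimitiveVector.exists_eq_zsmul {v : Fin d → ℤ} (hv : IsPrimitiveVector v)
    {u : Fin d → ℤ} {t : ℝ} (h : latticeToReal u = t • latticeToReal v) : ∃ m : ℤ, u = m • v := by
  obtain ⟨c, hc⟩ := hv.exists_sum_mul_eq_one
  have hcoord (i : Fin d) : (u i : ℝ) = t * v i := congrFun h i
  have ht : t = ((∑ i, c i * u i : ℤ) : ℝ) := by
    calc t = t * ((∑ i, c i * v i : ℤ) : ℝ) := by rw [hc, Int.cast_one, mul_one]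
      _ = ((∑ i, c i * u i : ℤ) : ℝ) := by
        push_cast; simp only [hcoord, Finset.mul_sum]; ring_nf
  refine ⟨∑ i, c i * u i, funext fun i ↦ Int.cast_injective (α := ℝ) ?_⟩
  rw [Pi.smul_apply, smul_eq_mul, Int.cast_mul, ← ht, hcoord]

theorem isIntegralPolytope_segment (a b : Fin d → ℤ) :
    IsIntegralPolytope (segment ℝ (latticeToReal a) (latticeToReal b)) :=
  ⟨{a, b}, by rw [Finset.coe_pair, Set.image_pair, convexHull_pair]⟩

theorem IsIntegralPolytope.exists_eq_segment_of_subset_line {v : Fin d → ℤ}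
    (hv : IsPrimitiveVector v) {P : Set (Fin d → ℝ)} (hP : IsIntegralPolytope P)
    (hne : P.Nonempty) {x₀ : Fin d → ℝ}
    (hline : P ⊆ (AffineSubspace.mk' x₀ (ℝ ∙ latticeToReal v) : Set (Fin d → ℝ))) :
    ∃ (a : Fin d → ℤ) (k : ℕ),
      P = segment ℝ (latticeToReal a) (latticeToReal a + (k : ℝ) • latticeToReal v) := by
  obtain ⟨S, rfl⟩ := hP
  obtain ⟨u₀, hu₀⟩ : S.Nonempty := by
    by_contra hS
    simp [Finset.not_nonempty_iff_eq_empty.1 hS] at hne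
  have hmem {u} (hu : u ∈ S) : latticeToReal u ∈ (AffineSubspace.mk' x₀ (ℝ ∙ latticeToReal v)) :=
    hline (subset_convexHull ℝ _ ⟨u, hu, rfl⟩)
  have hS : (S : Set (Fin d → ℤ)) ⊆ (fun m : ℤ ↦ u₀ + m • v) '' Set.univ := by
    intro u hu
    have hdiff := AffineSubspace.vsub_mem_direction (hmem hu) (hmem hu₀)
    rw [AffineSubspace.direction_mk', vsub_eq_sub, Submodule.mem_span_singleton] at hdiff
    obtain ⟨t, ht⟩ := hdiff
    obtain ⟨m, hm⟩ := hv.exists_eq_zsmul (u := u - u₀) (t := t) (by rw [latticeToReal_sub, ht])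
    exact ⟨m, trivial, show u₀ + m • v = u by rw [← hm, add_sub_cancel]⟩
  obtain ⟨M, -, rfl⟩ := Finset.subset_set_image_iff.1 hS
  have hM : M.Nonempty := Finset.image_nonempty.1 ⟨u₀, hu₀⟩
  obtain ⟨k, hk⟩ := Int.eq_ofNat_of_zero_le (sub_nonneg.2 (M.min'_le_max' hM))
  refine ⟨u₀ + M.min' hM • v, k, ?_⟩
  have hpoints : latticeToReal '' ↑(M.image fun m : ℤ ↦ u₀ + m • v) =
      (fun m : ℤ ↦ latticeToReal u₀ + (m : ℝ) • latticeToReal v) '' M := by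
    rw [Finset.coe_image, Set.image_image]
    simp only [latticeToReal_add, latticeToReal_zsmul]
  rw [hpoints, convexHull_image_add_intCast_smul (M.isLeast_min' hM) (M.isGreatest_max' hM),
    eq_add_of_sub_eq' hk]
  simp only [latticeToReal_add, latticeToReal_zsmul, Int.cast_add, Int.cast_natCast, add_smul,
    add_assoc]

theorem IsIrreducibleIntegralPolytope.eq_one_of_eq_segment {v : Fin d → ℤ} (hv : v ≠ 0)
    {P : Set (Fin d → ℝ)} (hP : IsIrreducibleIntegralPolytope P) {a : Fin d → ℤ} {k : ℕ}
    (h : P = segment ℝ (latticeToReal a) (latticeToReal a + (k : ℝ) • latticeToReal v)) :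
    k = 1 := by
  set w := latticeToReal v
  have hintegral (x : Fin d → ℤ) (j : ℕ) :
      IsIntegralPolytope (segment ℝ (latticeToReal x) (latticeToReal x + (j : ℝ) • w)) := by
    have := isIntegralPolytope_segment x (x + (j : ℤ) • v)
    rwa [latticeToReal_add, latticeToReal_zsmul, Int.cast_natCast] at this
  have hnonpoint (x : Fin d → ℝ) {j : ℕ} (hj : j ≠ 0) :
      ¬ ∃ z, segment ℝ x (x + (j : ℝ) • w) = {z} :=
    not_exists_segment_eq_singleton <| left_ne_add.2 <|
      smul_ne_zero (Nat.cast_ne_zero.2 hj) (latticeToReal_ne_zero hv)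
  subst h
  rcases k with _ | _ | j
  · exact absurd ⟨latticeToReal a, by simp⟩ hP.2.1
  · rfl
  · refine absurd ⟨_, _, hintegral a 1, latticeToReal_zero (d := d) ▸ hintegral 0 (j + 1),
      hnonpoint _ one_ne_zero, hnonpoint _ j.succ_ne_zero, ?_⟩ hP.2.2
    rw [segment_add_smul, segment_add_smul, segment_add_smul, add_add_add_comm,
      Set.singleton_add_singleton, add_zero,
      ← (convex_segment 0 w).add_smul (Nat.cast_nonneg _) (Nat.cast_nonneg _)]
    push_cast
    ring_nf

theorem IsIrreducibleIntegralPolytope.exists_eq_singleton_add_of_add_eq_segment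
    {v : Fin d → ℤ} (hv : IsPrimitiveVector v) {P C : Set (Fin d → ℝ)}
    (hP : IsIrreducibleIntegralPolytope P) {x : Fin d → ℝ} {c : ℝ}
    (h : P + C = segment ℝ x (x + c • latticeToReal v)) :
    ∃ a : Fin d → ℤ, P = {latticeToReal a} + segment ℝ 0 (latticeToReal v) := by
  have hPC : (P + C).Nonempty := by rw [h]; exact ⟨x, left_mem_segment ℝ _ _⟩
  obtain ⟨hPne, hCne⟩ := Set.add_nonempty.1 hPC
  obtain ⟨x₀, hline⟩ := exists_subset_line_of_add_eq_segment hCne h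
  obtain ⟨a, k, hk⟩ := hP.1.exists_eq_segment_of_subset_line hv hPne hline
  obtain rfl := hP.eq_one_of_eq_segment hv.1 hk
  exact ⟨a, by rw [hk, segment_add_smul, Nat.cast_one, one_smul]⟩

end Lattice

theorem segment_minkowski_decomposition_general {d : ℕ} (p v : Fin d → ℤ) (n : ℕ)
    (hv : IsPrimitiveVector v) :
    segment ℝ (latticeToReal p) (latticeToReal p + n • latticeToReal v) =
        {latticeToReal p} + (List.replicate n (segment ℝ 0 (latticeToReal v))).sum ∧
      ∀ L : List (Set (Fin d → ℝ)), (∀ P ∈ L, IsIrreducibleIntegralPolytope P) →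
        (∃ q : Fin d → ℤ, L.sum + {latticeToReal q} =
            segment ℝ (latticeToReal p) (latticeToReal p + n • latticeToReal v)) →
          L.length = n ∧
            ∀ P ∈ L, ∃ t : Fin d → ℤ,
              P = (fun x => x + latticeToReal t) '' segment ℝ 0 (latticeToReal v) := by
  set w := latticeToReal v
  have hI : (segment ℝ 0 w).Nonempty := ⟨0, left_mem_segment ℝ 0 w⟩
  have hnsmul (m : ℕ) : m • segment ℝ 0 w = (m : ℝ) • segment ℝ 0 w :=
    (convex_segment 0 w).nsmul_eq_smul hI m
  rw [← Nat.cast_smul_eq_nsmul ℝ n w]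
  refine ⟨by rw [List.sum_replicate, hnsmul, segment_add_smul], ?_⟩
  rintro L hL ⟨q, hq⟩
  have hunit : ∀ P ∈ L, ∃ a : Fin d → ℤ, P = {latticeToReal a} + segment ℝ 0 w := by
    classical
    intro P hP
    have hsplit : P + ((L.erase P).sum + {latticeToReal q}) =
        segment ℝ (latticeToReal p) (latticeToReal p + (n : ℝ) • w) := by
      rw [← add_assoc, List.sum_erase hP, hq]
    exact (hL P hP).exists_eq_singleton_add_of_add_eq_segment hv hsplit
  obtain ⟨A, hA⟩ := exists_list_sum_eq_singleton_add_nsmul fun P hP ↦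
    (hunit P hP).elim fun _ ha ↦ ⟨_, ha⟩
  rw [hA, hnsmul, add_right_comm, Set.singleton_add_singleton, ← segment_add_smul] at hq
  have hlen := eq_of_segment_add_smul_eq (latticeToReal_ne_zero hv.1) (Nat.cast_nonneg _)
    (Nat.cast_nonneg _) hq
  refine ⟨by exact_mod_cast hlen, fun P hP ↦ ?_⟩
  obtain ⟨a, rfl⟩ := hunit P hP
  exact ⟨a, by rw [add_comm, Set.add_singleton]⟩

/-- a one-dimensional integral polytope (segment) of integral length `n`
in `ℤᵈ`, i.e. the segment from `p` to `p + n • v` with `v` primitive, decomposes as the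
Minkowski sum of `n` integral segments of integral length 1, and every decomposition of
it into irreducible integral summands consists of exactly `n` summands, each a lattice
translate of the unit segment `[0, v]`. -/
theorem segment_minkowski_decomposition {d : ℕ} (p v : Fin d → ℤ) (n : ℕ) (hn : 0 < n)
    (hv : IsPrimitiveVector v) :
    segment ℝ (latticeToReal p) (latticeToReal p + n • latticeToReal v) =
        {latticeToReal p} + (List.replicate n (segment ℝ 0 (latticeToReal v))).sum ∧
      ∀ L : List (Set (Fin d → ℝ)), (∀ P ∈ L, IsIrreducibleIntegralPolytope P) →
        (∃ q : Fin d → ℤ, L.sum + {latticeToReal q} =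
            segment ℝ (latticeToReal p) (latticeToReal p + n • latticeToReal v)) →
          L.length = n ∧
            ∀ P ∈ L, ∃ t : Fin d → ℤ,
              P = (fun x => x + latticeToReal t) '' segment ℝ 0 (latticeToReal v) :=
  segment_minkowski_decomposition_general p v n hv
end

section
/- The constant term of every power f^i of a Laurent polynomial f in variables x₀,…,xₙ is invariant under the cluster-type change of variables x₀ ↦ x₀/g(x₁,…,xₙ), x_j ↦ x_j for j ≥ 1, provided the result is again a Laurent polynomial; equivalently, for Laurent polynomials f and f′ related by such a substitution, the constant terms of f^i and (f′)^i agree for all i ≥ 0. -/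
/-!
Write `f = g h x₀ + f₀ + f₋ x₀⁻¹` and `f′ = h x₀ + f₀ + f₋ g x₀⁻¹`, so that formally
`f′(x₀) = f(x₀ / g)`. Since `g` need not be invertible, record this relation denominator-free on
coefficients: the `x₀ᵐ`-coefficient of `f` is `gᵐ` times that of `f′`, and the `x₀⁻ᵐ`-coefficient
of `f′` is `gᵐ` times that of `f`, for `m ≥ 0`. Multiplication by the trinomials `f`, `f′`
preserves this relation (each new coefficient is a three-term combination of old ones), so it
holds for `f ^ i` and `f′ ^ i`; at `m = 0` it says that their constant terms agree.
-/

open LaurentPolynomial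

/-- Laurent polynomials in the variables `x₁, …, xₙ`. -/
abbrev LaurentRing (n : ℕ) := AddMonoidAlgebra ℂ (Fin n → ℤ)

/-- The constant term (coefficient at `x₀⁰x₁⁰⋯xₙ⁰`) of a Laurent polynomial in
`x₀, x₁, …, xₙ`, written as a Laurent polynomial in `x₀` (the variable `T`) with
coefficients Laurent polynomials in `x₁, …, xₙ`. -/
noncomputable def constantTerm {n : ℕ} (f : LaurentPolynomial (LaurentRing n)) : ℂ :=
  (AddMonoidAlgebra.coeff (AddMonoidAlgebra.coeff f 0)) 0

namespace LaurentPolynomial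

variable {R : Type*}

lemma coeff_C_mul_T_mul [Semiring R] (a : R) (n : ℤ) (p : R[T;T⁻¹]) (k : ℤ) :
    (C a * T n * p).coeff k = a * p.coeff (k - n) := by
  rw [← single_eq_C_mul_T, AddMonoidAlgebra.coeff_single_mul_apply, neg_add_eq_sub]

lemma coeff_trinomial_mul [Semiring R] (a b c : R) (p : R[T;T⁻¹]) (k : ℤ) :
    ((C a * T 1 + C b + C c * T (-1)) * p).coeff k =
      a * p.coeff (k - 1) + b * p.coeff k + c * p.coeff (k + 1) := by
  rw [← mul_one (C b), ← T_zero]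
  simp only [add_mul, AddMonoidAlgebra.coeff_add, Finsupp.add_apply, coeff_C_mul_T_mul,
    sub_zero, sub_neg_eq_add]

/-- `q = p(T / g)` with denominators cleared: `q_m = p_m / gᵐ` and `q_{-m} = gᵐ p_{-m}` for
`m ≥ 0`. -/
structure IsRescaling [Semiring R] (g : R) (p q : R[T;T⁻¹]) : Prop where
  coeff_natCast (m : ℕ) : p.coeff m = g ^ m * q.coeff m
  coeff_neg_natCast (m : ℕ) : q.coeff (-m) = g ^ m * p.coeff (-m)

namespace IsRescaling
variable [CommSemiring R] {g : R} {p q : R[T;T⁻¹]}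

lemma one (g : R) : IsRescaling g 1 1 where
  coeff_natCast
    | 0 => by simp
    | m + 1 => by simp [← T_zero, T_apply, show (0 : ℤ) ≠ m + 1 by omega]
  coeff_neg_natCast
    | 0 => by simp
    | m + 1 => by simp [← T_zero, T_apply, show (0 : ℤ) ≠ -1 + -m by omega]

lemma coeff_zero_eq (hpq : IsRescaling g p q) : p.coeff 0 = q.coeff 0 := by
  simpa using hpq.coeff_natCast 0

lemma coeff_one_eq (hpq : IsRescaling g p q) : p.coeff 1 = g * q.coeff 1 := by
  simpa using hpq.coeff_natCast 1

lemma coeff_neg_one_eq (hpq : IsRescaling g p q) : q.coeff (-1) = g * p.coeff (-1) := by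
  simpa using hpq.coeff_neg_natCast 1

lemma trinomial_mul (hpq : IsRescaling g p q) (h b c : R) :
    IsRescaling g ((C (g * h) * T 1 + C b + C c * T (-1)) * p)
      ((C h * T 1 + C b + C (c * g) * T (-1)) * q) := by
  have hp := hpq.coeff_natCast
  have hq := hpq.coeff_neg_natCast
  constructor <;> rintro (_ | m) <;>
    simp only [coeff_trinomial_mul, Nat.cast_zero, neg_zero, zero_sub, zero_add, pow_zero, one_mul]
  · rw [hpq.coeff_zero_eq, hpq.coeff_one_eq, hpq.coeff_neg_one_eq]
    ring
  · rw [show ((m + 1 : ℕ) : ℤ) - 1 = m by omega, show ((m + 1 : ℕ) : ℤ) + 1 = (m + 2 : ℕ) by omega,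
      hp m, hp (m + 1), hp (m + 2)]
    ring
  · rw [hpq.coeff_zero_eq, hpq.coeff_one_eq, hpq.coeff_neg_one_eq]
    ring
  · rw [show -((m + 1 : ℕ) : ℤ) - 1 = -(m + 2 : ℕ) by omega,
      show -((m + 1 : ℕ) : ℤ) + 1 = -m by omega, hq m, hq (m + 1), hq (m + 2)]
    ring

lemma trinomial_pow (g h b c : R) (i : ℕ) :
    IsRescaling g ((C (g * h) * T 1 + C b + C c * T (-1)) ^ i)
      ((C h * T 1 + C b + C (c * g) * T (-1)) ^ i) := by
  induction i with
  | zero => simpa only [pow_zero] using one g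
  | succ i ih => simpa only [pow_succ'] using ih.trinomial_mul h b c

end IsRescaling
end LaurentPolynomial

/-- if `f = f₊·x₀ + f₀ + f₋/x₀` with `f₊ = g·h`, and
`f′ = (f₊/g)·x₀ + f₀ + f₋·g/x₀` is its transform under the cluster-type change of
variables `x₀ ↦ x₀/g`, then for every `i ≥ 0` the constant terms of `f^i` and `(f′)^i`
agree. -/
theorem constantTerm_pow_cluster_invariant {n : ℕ}
    (fplus f0 fminus g h : LaurentRing n) (hfac : fplus = g * h) (i : ℕ) :
    constantTerm ((C fplus * T 1 + C f0 + C fminus * T (-1)) ^ i) =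
      constantTerm ((C h * T 1 + C f0 + C (fminus * g) * T (-1)) ^ i) := by
  subst hfac
  exact congrArg (AddMonoidAlgebra.coeff · 0)
    (IsRescaling.trinomial_pow g h f0 fminus i).coeff_zero_eq
end

section
/- Let f = f₊(x₁,…,xₙ)·x₀ + f₀(x₁,…,xₙ) + f₋(x₁,…,xₙ)/x₀ be a Laurent polynomial with f₊ = f₁·f₂ a product of Laurent polynomials. Then the substitution x₀ ↦ x₀/f₂ transforms f into the Laurent polynomial f′ = f₁·x₀ + f₀ + f₋·f₂/x₀. -/
open LaurentPolynomial

set_option maxHeartbeats 1000000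
set_option synthInstance.maxHeartbeats 400000

noncomputable instance (n : ℕ) : IsDomain (LaurentRing n) :=
  NoZeroDivisors.to_isDomain _

noncomputable instance (n : ℕ) : IsDomain (LaurentPolynomial (LaurentRing n)) :=
  NoZeroDivisors.to_isDomain _

/-- The field of fractions of the ring of Laurent polynomials in `x₀, x₁, …, xₙ`
(Laurent polynomials in `x₀` with coefficients Laurent polynomials in `x₁, …, xₙ`). -/
abbrev LaurentFractionField (n : ℕ) := FractionRing (LaurentPolynomial (LaurentRing n))

/-- The embedding of Laurent polynomials into the field of fractions. -/
noncomputable def ι (n : ℕ) :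
    LaurentPolynomial (LaurentRing n) →+* LaurentFractionField n :=
  algebraMap _ _

theorem LaurentPolynomial.map_T_neg_one {R K : Type*} [CommSemiring R] [DivisionRing K]
    (φ : R[T;T⁻¹] →+* K) : φ (T (-1)) = (φ (T 1))⁻¹ :=
  eq_inv_of_mul_eq_one_left <| by rw [← map_mul, ← T_add, neg_add_cancel, T_zero, map_one]

theorem ι_C_ne_zero {n : ℕ} {f : LaurentRing n} (hf : f ≠ 0) : ι n (C f) ≠ 0 :=
  (map_ne_zero_iff _ (IsFractionRing.injective _ _)).2 <| by
    rwa [← single_eq_C, Ne, AddMonoidAlgebra.single_eq_zero]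

/-- let `f = f₊·x₀ + f₀ + f₋/x₀` be a Laurent polynomial with
`f₊ = f₁·f₂`. Then, in the field of fractions, substituting `x₀ ↦ x₀/f₂` into `f`
yields the Laurent polynomial `f′ = f₁·x₀ + f₀ + f₋·f₂/x₀`. -/
theorem cluster_substitution {n : ℕ} (fplus f0 fminus f1 f2 : LaurentRing n)
    (hfac : fplus = f1 * f2) (hf2 : f2 ≠ 0) :
    ι n (C fplus) * (ι n (T 1) / ι n (C f2)) + ι n (C f0) +
        ι n (C fminus) * (ι n (C f2) / ι n (T 1)) =
      ι n (C f1 * T 1 + C f0 + C (fminus * f2) * T (-1)) := by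
  have hC2 := ι_C_ne_zero hf2
  subst hfac
  simp only [map_add, map_mul, map_T_neg_one]
  field_simp
end

section
/- The cluster-type change of variables y ↦ y/(x+1) applied to f₀ = (x+1)²/(xyz) + y + z yields f₁ = (x+1)/(xyz) + y(x+1) + z, and applying the same change of variables to f₁ returns f₀ up to the toric change of variables interchanging the roles appropriately. -/
/-- The field `ℂ(x,y,z)` of rational functions in three variables. -/
abbrev K3 := FractionRing (MvPolynomial (Fin 3) ℂ)

/-- The coordinate functions `x, y, z` in `ℂ(x,y,z)`. -/
noncomputable def Xv (i : Fin 3) : K3 := algebraMap (MvPolynomial (Fin 3) ℂ) K3 (MvPolynomial.X i)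

/-- The monomial in `x, y, z` with exponent vector given by the `i`-th row of an
integer matrix `M`; substituting these monomials for the variables is the toric change
of variables attached to `M ∈ GL(3,ℤ)`. -/
noncomputable def toricMono (M : Matrix (Fin 3) (Fin 3) ℤ) (i : Fin 3) : K3 :=
  Xv 0 ^ M i 0 * Xv 1 ^ M i 1 * Xv 2 ^ M i 2

/-- `f₀ = (x+1)²/(xyz) + y + z`, the Hori–Vafa weak LG model of the quadric threefold,
as a function of the three (invertible) variables. -/
noncomputable def F₀ (x y z : K3) : K3 := (x + 1) ^ 2 / (x * y * z) + y + z

/-- `f₁ = (x+1)/(xyz) + y(x+1) + z` as a function of the three variables. -/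
noncomputable def F₁ (x y z : K3) : K3 := (x + 1) / (x * y * z) + y * (x + 1) + z

/-!
Substituting `y(x+1)` for `y` cancels one factor `x+1` from the numerator `(x+1)²` of `f₀`,
which gives `f₁`. Doing it once more turns `f₁` into `1/(xyz) + y(x+1)² + z`, and the
monomial substitution `(x, y, z) ↦ (x⁻¹, z, (xyz)⁻¹)`, with unimodular exponent matrix,
carries `f₀` to exactly this Laurent polynomial.
-/

theorem MvPolynomial.X_add_one_ne_zero {σ R : Type*} [CommSemiring R] [Nontrivial R] (i : σ) :
    (X i + 1 : MvPolynomial σ R) ≠ 0 := by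
  classical
  intro h
  have := congrArg (coeff (Finsupp.single i 1)) h
  rw [coeff_add, coeff_X_same, coeff_one, if_neg (Finsupp.single_ne_zero.mpr one_ne_zero).symm,
    add_zero, coeff_zero] at this
  exact one_ne_zero this

lemma Xv_ne_zero (i : Fin 3) : Xv i ≠ 0 :=
  IsFractionRing.to_map_ne_zero_of_mem_nonZeroDivisors
    (mem_nonZeroDivisors_of_ne_zero (MvPolynomial.X_ne_zero i))

lemma Xv_add_one_ne_zero (i : Fin 3) : Xv i + 1 ≠ 0 := by
  have h := IsFractionRing.to_map_ne_zero_of_mem_nonZeroDivisors (K := K3)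
    (mem_nonZeroDivisors_of_ne_zero (MvPolynomial.X_add_one_ne_zero (R := ℂ) i))
  rwa [map_add, map_one] at h

lemma F₀_cluster_eq_F₁ (x y z : K3) (hx : x + 1 ≠ 0) : F₀ x (y * (x + 1)) z = F₁ x y z := by
  unfold F₀ F₁
  rw [show x * (y * (x + 1)) * z = x * y * z * (x + 1) by ring, sq, mul_div_mul_right _ _ hx]

lemma F₁_cluster_eq (x y z : K3) (hx : x + 1 ≠ 0) :
    F₁ x (y * (x + 1)) z = (x * y * z)⁻¹ + y * (x + 1) ^ 2 + z := by
  unfold F₁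
  rw [show x * (y * (x + 1)) * z = x * y * z * (x + 1) by ring, div_mul_cancel_right₀ hx]
  ring

lemma F₀_inv_monomials_eq (x y z : K3) (hx : x ≠ 0) (hy : y ≠ 0) (hz : z ≠ 0) :
    F₀ x⁻¹ z (x * y * z)⁻¹ = (x * y * z)⁻¹ + y * (x + 1) ^ 2 + z := by
  unfold F₀
  field_simp
  ring

def quadricToricMatrix : Matrix (Fin 3) (Fin 3) ℤ := !![-1, 0, 0; 0, 0, 1; -1, -1, -1]

lemma isUnit_det_quadricToricMatrix : IsUnit quadricToricMatrix.det := by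
  decide

lemma toricMono_quadricToricMatrix_zero : toricMono quadricToricMatrix 0 = (Xv 0)⁻¹ := by
  simp [toricMono, quadricToricMatrix]

lemma toricMono_quadricToricMatrix_one : toricMono quadricToricMatrix 1 = Xv 2 := by
  simp [toricMono, quadricToricMatrix]

lemma toricMono_quadricToricMatrix_two :
    toricMono quadricToricMatrix 2 = (Xv 0 * Xv 1 * Xv 2)⁻¹ := by
  simp [toricMono, quadricToricMatrix]
  ring

/-- the cluster-type change of variables `y ↦ y/(x+1)` (i.e. substituting
`y(x+1)` for `y`) transforms `f₀` into `f₁`, and applying the same change of variables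
to `f₁` returns `f₀` up to a toric change of variables (a monomial substitution given
by a matrix in `GL(3,ℤ)`). -/
theorem quadric_cluster_transformation :
    F₀ (Xv 0) (Xv 1 * (Xv 0 + 1)) (Xv 2) = F₁ (Xv 0) (Xv 1) (Xv 2) ∧
      ∃ M : Matrix (Fin 3) (Fin 3) ℤ, IsUnit M.det ∧
        F₁ (Xv 0) (Xv 1 * (Xv 0 + 1)) (Xv 2) =
          F₀ (toricMono M 0) (toricMono M 1) (toricMono M 2) := by
  refine ⟨F₀_cluster_eq_F₁ _ _ _ (Xv_add_one_ne_zero 0), quadricToricMatrix,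
    isUnit_det_quadricToricMatrix, ?_⟩
  rw [toricMono_quadricToricMatrix_zero, toricMono_quadricToricMatrix_one,
    toricMono_quadricToricMatrix_two,
    F₀_inv_monomials_eq _ _ _ (Xv_ne_zero 0) (Xv_ne_zero 1) (Xv_ne_zero 2),
    F₁_cluster_eq _ _ _ (Xv_add_one_ne_zero 0)]
end
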